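/- arXiv:1606.01856 — 4 statements merged into one kernel-verified Lean document; each statement's English description precedes it below -/
import Mathlib

section
/- Let G be a generator with dimensions w_G, h_G and stages (X_i)_{i≥1}. Then for every i ≥ 1 and any two distinct points (a,b), (a′,b′) ∈ G, the translated copies X_i + (w_G^i·a, h_G^i·b) and X_i + (w_G^i·a′, h_G^i·b′) are disjoint. -/
/-- Two lattice points are adjacent iff they are at Euclidean distance 1
(i.e. they differ by exactly 1 in exactly one coordinate). -/
def adjPt (p q : ℕ × ℕ) : Prop :=
  (p.1 = q.1 ∧ (p.2 + 1 = q.2 ∨ q.2 + 1 = p.2)) ∨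
  (p.2 = q.2 ∧ (p.1 + 1 = q.1 ∨ q.1 + 1 = p.1))

/-- The graph with vertex set `S` and an edge between any two points at
Euclidean distance 1. -/
def gridGraph (S : Set (ℕ × ℕ)) : SimpleGraph S where
  Adj p q := adjPt p.1 q.1
  symm := by
    constructor
    rintro ⟨p, hp⟩ ⟨q, hq⟩ (⟨h1, h2⟩ | ⟨h1, h2⟩)
    · exact Or.inl ⟨h1.symm, h2.symm⟩
    · exact Or.inr ⟨h1.symm, h2.symm⟩
  loopless := by
    constructor
    rintro ⟨p, hp⟩ (⟨_, h | h⟩ | ⟨_, h | h⟩) <;> omega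

/-- A set `S ⊆ ℕ²` is connected if its grid graph is connected. -/
def IsConnectedSet (S : Set (ℕ × ℕ)) : Prop := (gridGraph S).Connected

/-- `wG G = max{x | (x,y) ∈ G} + 1`. -/
noncomputable def wG (G : Set (ℕ × ℕ)) : ℕ := sSup ((fun p => p.1) '' G) + 1

/-- `hG G = max{y | (x,y) ∈ G} + 1`. -/
noncomputable def hG (G : Set (ℕ × ℕ)) : ℕ := sSup ((fun p => p.2) '' G) + 1

/-- The rectangle `{0,…,w−1} × {0,…,h−1}`. -/
def gridBox (w h : ℕ) : Set (ℕ × ℕ) := {p | p.1 < w ∧ p.2 < h}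

/-- `G` is a generator of a discrete self-similar fractal. -/
structure IsGenerator (G : Set (ℕ × ℕ)) : Prop where
  finite : G.Finite
  zero_mem : (0, 0) ∈ G
  connected : IsConnectedSet G
  one_lt_w : 1 < wG G
  one_lt_h : 1 < hG G
  ssubset_box : G ⊂ gridBox (wG G) (hG G)

/-- The stages of the discrete self-similar fractal generated by `G`:
`X_1 = G` and `X_{i+1} = X_i + (wG^i, hG^i)·G`.  (`stage G 0` is unused.) -/
noncomputable def stage (G : Set (ℕ × ℕ)) : ℕ → Set (ℕ × ℕ)
  | 0 => ∅
  | 1 => G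
  | (i + 2) => {p | ∃ a ∈ stage G (i + 1), ∃ b ∈ G,
      p = (a.1 + wG G ^ (i + 1) * b.1, a.2 + hG G ^ (i + 1) * b.2)}

/-- The discrete self-similar fractal `F = ⋃_{i ≥ 1} X_i` generated by `G`. -/
noncomputable def fractal (G : Set (ℕ × ℕ)) : Set (ℕ × ℕ) := ⋃ i : ℕ, stage G (i + 1)

/-- The generator of the Sierpinski triangle: `{(0,0),(1,0),(0,1)}`. -/
def sierpGen : Set (ℕ × ℕ) := {(0, 0), (1, 0), (0, 1)}

/-
Every stage `X_i` lies in the box `[0, w^i) × [0, h^i)`, so a point of the translate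
`X_i + (w^i a, h^i b)` has `x`-coordinate with quotient `a` on division by `w^i`
and `y`-coordinate with quotient `b` on division by `h^i`; the translation vector
is thus recovered from any point of the translate.
-/

lemma eq_of_add_mul_eq_add_mul {n x y a b : ℕ} (hx : x < n) (hy : y < n)
    (h : x + n * a = y + n * b) : a = b := by
  have hn : 0 < n := by omega
  calc a = (x + n * a) / n := (((Nat.div_mod_unique hn).2 ⟨rfl, hx⟩).1).symm
    _ = (y + n * b) / n := by rw [h]
    _ = b := ((Nat.div_mod_unique hn).2 ⟨rfl, hy⟩).1

lemma add_mul_mem_gridBox_pow_succ {w h k : ℕ} {p q : ℕ × ℕ}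
    (hp : p ∈ gridBox (w ^ k) (h ^ k)) (hq : q ∈ gridBox w h) :
    (p.1 + w ^ k * q.1, p.2 + h ^ k * q.2) ∈ gridBox (w ^ (k + 1)) (h ^ (k + 1)) := by
  rw [pow_succ, pow_succ]
  exact ⟨Nat.add_mul_lt_mul_of_lt_of_lt hp.1 hq.1, Nat.add_mul_lt_mul_of_lt_of_lt hp.2 hq.2⟩

lemma stage_subset_gridBox {G : Set (ℕ × ℕ)} (hbox : G ⊆ gridBox (wG G) (hG G)) {i : ℕ}
    (hi : 1 ≤ i) : stage G i ⊆ gridBox (wG G ^ i) (hG G ^ i) := by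
  induction i, hi using Nat.le_induction with
  | base => simpa [stage] using hbox
  | succ k hk ih =>
    obtain ⟨k, rfl⟩ := Nat.exists_eq_add_of_le' hk
    rintro _ ⟨p, hp, q, hq, rfl⟩
    exact add_mul_mem_gridBox_pow_succ (ih hp) (hbox hq)

/-- for every `i ≥ 1` and distinct `(a,b), (a',b') ∈ G`, the
translated copies `X_i + (wG^i·a, hG^i·b)` and `X_i + (wG^i·a', hG^i·b')`
are disjoint. -/
theorem stage_translates_disjoint (G : Set (ℕ × ℕ)) (hGen : IsGenerator G) :
    ∀ i : ℕ, 1 ≤ i → ∀ a b a' b' : ℕ, (a, b) ∈ G → (a', b') ∈ G →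
      (a, b) ≠ (a', b') →
      Disjoint
        ((fun p : ℕ × ℕ => (p.1 + wG G ^ i * a, p.2 + hG G ^ i * b)) '' stage G i)
        ((fun p : ℕ × ℕ => (p.1 + wG G ^ i * a', p.2 + hG G ^ i * b')) '' stage G i) := by
  intro i hi a b a' b' _ _ hne
  rw [Set.disjoint_left]
  rintro _ ⟨p, hp, rfl⟩ ⟨q, hq, hqp⟩
  have hp := stage_subset_gridBox hGen.ssubset_box.subset hi hp
  have hq := stage_subset_gridBox hGen.ssubset_box.subset hi hq
  simp only [Prod.mk.injEq] at hqp
  exact hne (Prod.ext (eq_of_add_mul_eq_add_mul hq.1 hp.1 hqp.1).symm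
    (eq_of_add_mul_eq_add_mul hq.2 hp.2 hqp.2).symm)
end

section
/- Let G be a generator with dimensions w_G, h_G and fractal F = ⋃_{i≥1} X_i. Then F has arbitrarily large rectangular holes: for every i ≥ 1 there exists (u,v) ∈ ℕ² such that the rectangle {u,…,u+w_G^i−1} × {v,…,v+h_G^i−1} is disjoint from F. -/
/-!
Every point of a stage `X_{j+1}` is a sum `∑_{k ≤ j} (wᵏ bₖ.1, hᵏ bₖ.2)` with `bₖ ∈ G`, and the
partial sums stay inside the box `[0, w^(k+1)) × [0, h^(k+1))`, so no carries occur: the pair of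
`k`-th digits (base `w` for `x`, base `h` for `y`) of any point of the fractal lies in `G`, being
`bₖ` for `k ≤ j` and `(0,0)` beyond. As `G` is a proper subset of its bounding box, some `q` with
`q.1 < w`, `q.2 < h` is missing from `G`; all points of `[q.1 wⁱ, (q.1+1) wⁱ) × [q.2 hⁱ, (q.2+1) hⁱ)`
have `i`-th digit pair `q`, so this rectangle misses the fractal.
-/

namespace Nat

def digitAt (b k x : ℕ) : ℕ := x / b ^ k % b

theorem digitAt_add_pow_mul_of_lt {b k n : ℕ} (hb : 0 < b) (hk : k < n) (a c : ℕ) :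
    digitAt b k (a + b ^ n * c) = digitAt b k a := by
  have hsplit : b ^ n * c = b ^ k * (b * (b ^ (n - k - 1) * c)) := by
    rw [← mul_assoc, ← mul_assoc, ← pow_succ, ← pow_add]
    congr 2
    omega
  rw [digitAt, digitAt, hsplit, Nat.add_mul_div_left _ _ (pow_pos hb k), Nat.add_mul_mod_self_left]

theorem digitAt_add_pow_mul_of_le {b k n a : ℕ} (ha : a < b ^ n) (hk : n ≤ k) (c : ℕ) :
    digitAt b k (a + b ^ n * c) = digitAt b (k - n) c := by
  have hsplit : b ^ k = b ^ n * b ^ (k - n) := by rw [← pow_add, Nat.add_sub_cancel' hk]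
  rw [digitAt, digitAt, hsplit, ← Nat.div_div_eq_div_mul,
    Nat.add_mul_div_left _ _ (Nat.zero_lt_of_lt ha), Nat.div_eq_of_lt ha, Nat.zero_add]

theorem digitAt_zero_eq_of_lt {b x : ℕ} (hx : x < b) : digitAt b 0 x = x := by
  rw [digitAt, pow_zero, Nat.div_one, Nat.mod_eq_of_lt hx]

theorem digitAt_eq_zero_of_lt {b k x : ℕ} (hx : x < b) (hk : k ≠ 0) : digitAt b k x = 0 := by
  rw [digitAt, Nat.div_eq_of_lt (hx.trans_le (Nat.le_self_pow hk b)), Nat.zero_mod]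

theorem digitAt_eq_of_le_of_lt {b k q x : ℕ} (hq : q < b) (hlo : q * b ^ k ≤ x)
    (hhi : x < q * b ^ k + b ^ k) : digitAt b k x = q := by
  rw [digitAt, Nat.div_eq_of_lt_le hlo (by rwa [Nat.succ_mul]), Nat.mod_eq_of_lt hq]

end Nat

open Nat

section Generator

variable {G : Set (ℕ × ℕ)}

def digitSet (G : Set (ℕ × ℕ)) : Set (ℕ × ℕ) :=
  {p | ∀ k, (digitAt (wG G) k p.1, digitAt (hG G) k p.2) ∈ G}

theorem IsGenerator.subset_digitSet (hGen : IsGenerator G) : G ⊆ digitSet G := by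
  intro p hp k
  obtain ⟨hp1, hp2⟩ : p.1 < wG G ∧ p.2 < hG G := hGen.ssubset_box.1 hp
  rcases eq_or_ne k 0 with rfl | hk
  · rwa [digitAt_zero_eq_of_lt hp1, digitAt_zero_eq_of_lt hp2]
  · rw [digitAt_eq_zero_of_lt hp1 hk, digitAt_eq_zero_of_lt hp2 hk]
    exact hGen.zero_mem

theorem IsGenerator.stage_subset_gridBox (hGen : IsGenerator G) (j : ℕ) :
    stage G (j + 1) ⊆ gridBox (wG G ^ (j + 1)) (hG G ^ (j + 1)) := by
  induction j with
  | zero => simpa [stage] using hGen.ssubset_box.1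
  | succ n ih =>
    rintro p ⟨a, ha, b, hb, rfl⟩
    obtain ⟨ha1, ha2⟩ := ih ha
    obtain ⟨hb1, hb2⟩ : b.1 < wG G ∧ b.2 < hG G := hGen.ssubset_box.1 hb
    constructor
    · calc a.1 + wG G ^ (n + 1) * b.1 < wG G ^ (n + 1) * (b.1 + 1) := by linarith
        _ ≤ wG G ^ (n + 1 + 1) := by rw [pow_succ _ (n + 1)]; gcongr; exact hb1
    · calc a.2 + hG G ^ (n + 1) * b.2 < hG G ^ (n + 1) * (b.2 + 1) := by linarith
        _ ≤ hG G ^ (n + 1 + 1) := by rw [pow_succ _ (n + 1)]; gcongr; exact hb2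

theorem IsGenerator.stage_subset_digitSet (hGen : IsGenerator G) (j : ℕ) :
    stage G (j + 1) ⊆ digitSet G := by
  have hw : 0 < wG G := by have := hGen.one_lt_w; omega
  have hh : 0 < hG G := by have := hGen.one_lt_h; omega
  induction j with
  | zero => exact hGen.subset_digitSet
  | succ n ih =>
    rintro p ⟨a, ha, b, hb, rfl⟩ k
    obtain ⟨ha1, ha2⟩ := hGen.stage_subset_gridBox n ha
    rcases lt_or_ge k (n + 1) with hk | hk
    · rw [digitAt_add_pow_mul_of_lt hw hk, digitAt_add_pow_mul_of_lt hh hk]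
      exact ih ha k
    · rw [digitAt_add_pow_mul_of_le ha1 hk, digitAt_add_pow_mul_of_le ha2 hk]
      exact hGen.subset_digitSet hb (k - (n + 1))

theorem IsGenerator.fractal_subset_digitSet (hGen : IsGenerator G) : fractal G ⊆ digitSet G :=
  Set.iUnion_subset hGen.stage_subset_digitSet

end Generator

/-- `F` has arbitrarily large rectangular holes: for every
`i ≥ 1` there is `(u,v)` with `{u,…,u+wG^i−1} × {v,…,v+hG^i−1}` disjoint
from `F`. -/
theorem fractal_has_large_holes (G : Set (ℕ × ℕ)) (hGen : IsGenerator G) :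
    ∀ i : ℕ, 1 ≤ i → ∃ u v : ℕ,
      Disjoint
        ({p : ℕ × ℕ | u ≤ p.1 ∧ p.1 < u + wG G ^ i ∧ v ≤ p.2 ∧ p.2 < v + hG G ^ i})
        (fractal G) := by
  intro i _
  obtain ⟨q, ⟨hq1, hq2⟩, hqG⟩ := Set.exists_of_ssubset hGen.ssubset_box
  refine ⟨q.1 * wG G ^ i, q.2 * hG G ^ i, Set.disjoint_left.2 ?_⟩
  rintro p ⟨hx_lo, hx_hi, hy_lo, hy_hi⟩ hpF
  have hdigits := hGen.fractal_subset_digitSet hpF i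
  rw [digitAt_eq_of_le_of_lt hq1 hx_lo hx_hi, digitAt_eq_of_le_of_lt hq2 hy_lo hy_hi] at hdigits
  exact hqG hdigits
end

section
/- Let G be a generator with dimensions w_G, h_G and stages (X_i)_{i≥1}, and suppose the second stage X_2 is connected. Then there exists x ∈ ℕ such that both (x,0) ∈ G and (x,h_G−1) ∈ G; that is, the bottom row and the top row of G occupy a common column, so that a vertical connection point between two vertically adjacent copies exists. -/
/-!
A path in `X_2` from `(0,0)` to the copy of `G` placed at a top point of `G` has to cross the
line `y = h_G` along a vertical edge `(x, h_G - 1) — (x, h_G)`. Every point `p` of `X_2` lies in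
some copy `(w_G·b.1, h_G·b.2) + G`, so its residues `(p.1 % w_G, p.2 % h_G)` form a point of `G`;
for the two ends of that edge these are `(x % w_G, h_G - 1)` and `(x % w_G, 0)`.
-/

lemma lt_wG_of_mem {G : Set (ℕ × ℕ)} (hfin : G.Finite) {a : ℕ × ℕ} (ha : a ∈ G) :
    a.1 < wG G :=
  Nat.lt_succ_of_le (le_csSup (hfin.image _).bddAbove ⟨a, ha, rfl⟩)

lemma lt_hG_of_mem {G : Set (ℕ × ℕ)} (hfin : G.Finite) {a : ℕ × ℕ} (ha : a ∈ G) :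
    a.2 < hG G :=
  Nat.lt_succ_of_le (le_csSup (hfin.image _).bddAbove ⟨a, ha, rfl⟩)

lemma exists_mem_snd_eq_hG_sub_one {G : Set (ℕ × ℕ)} (hfin : G.Finite) (hne : G.Nonempty) :
    ∃ b ∈ G, b.2 = hG G - 1 := by
  obtain ⟨b, hb, hb2⟩ := (hne.image Prod.snd).csSup_mem (hfin.image _)
  exact ⟨b, hb, by simp only [hG, hb2, Nat.add_sub_cancel]⟩

lemma mem_stage_two_iff {G : Set (ℕ × ℕ)} {p : ℕ × ℕ} :
    p ∈ stage G 2 ↔ ∃ a ∈ G, ∃ b ∈ G, p = (a.1 + wG G * b.1, a.2 + hG G * b.2) := by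
  simp [stage]

lemma mod_mem_of_mem_stage_two {G : Set (ℕ × ℕ)} (hfin : G.Finite) {p : ℕ × ℕ}
    (hp : p ∈ stage G 2) : (p.1 % wG G, p.2 % hG G) ∈ G := by
  obtain ⟨a, ha, b, -, rfl⟩ := mem_stage_two_iff.mp hp
  simpa only [Nat.add_mul_mod_self_left, Nat.mod_eq_of_lt (lt_wG_of_mem hfin ha),
    Nat.mod_eq_of_lt (lt_hG_of_mem hfin ha)] using ha

lemma adjPt_eq_of_snd_lt_le {p q : ℕ × ℕ} {h : ℕ} (hpq : adjPt p q) (hp : p.2 < h)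
    (hq : h ≤ q.2) : q = (p.1, h) ∧ p.2 + 1 = h := by
  rcases hpq with ⟨h1, _⟩ | ⟨_, _⟩
  · exact ⟨Prod.ext h1.symm (by omega), by omega⟩
  · omega

lemma IsConnectedSet.exists_vertical_crossing {S : Set (ℕ × ℕ)} (hS : IsConnectedSet S)
    {u v : ℕ × ℕ} (hu : u ∈ S) (hv : v ∈ S) {h : ℕ} (hu2 : u.2 < h) (hv2 : h ≤ v.2) :
    ∃ x, (x, h - 1) ∈ S ∧ (x, h) ∈ S := by
  obtain ⟨walk⟩ := hS.preconnected ⟨u, hu⟩ ⟨v, hv⟩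
  obtain ⟨d, -, hd₁, hd₂⟩ := walk.exists_boundary_dart {p | p.1.2 < h} hu2 (by simpa using hv2)
  obtain ⟨hq, hp⟩ := adjPt_eq_of_snd_lt_le d.adj hd₁ (not_lt.mp hd₂)
  refine ⟨d.fst.1.1, ?_, hq ▸ d.snd.2⟩
  have hfst : d.fst.1 = (d.fst.1.1, h - 1) := Prod.ext rfl (by omega)
  exact hfst ▸ d.fst.2

/-- if stage 2 is connected then the bottom and top rows of
`G` occupy a common column. -/
theorem vertical_connection_point (G : Set (ℕ × ℕ)) (hGen : IsGenerator G)
    (hconn : IsConnectedSet (stage G 2)) :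
    ∃ x : ℕ, (x, 0) ∈ G ∧ (x, hG G - 1) ∈ G := by
  have h0 : (0, 0) ∈ G := hGen.zero_mem
  have h1 : 1 < hG G := hGen.one_lt_h
  obtain ⟨b, hb, hb2⟩ := exists_mem_snd_eq_hG_sub_one hGen.finite ⟨_, h0⟩
  have hO : (0, 0) ∈ stage G 2 := mem_stage_two_iff.mpr ⟨_, h0, _, h0, by simp⟩
  have hB : (wG G * b.1, hG G * b.2) ∈ stage G 2 :=
    mem_stage_two_iff.mpr ⟨_, h0, b, hb, by simp⟩
  obtain ⟨x, hbot, htop⟩ := hconn.exists_vertical_crossing hO hB (show 0 < hG G by omega)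
    (Nat.le_mul_of_pos_right _ (by omega))
  refine ⟨x % wG G, ?_, ?_⟩
  · simpa using mod_mem_of_mem_stage_two hGen.finite htop
  · simpa [Nat.mod_eq_of_lt (Nat.sub_one_lt (by omega : hG G ≠ 0))] using
      mod_mem_of_mem_stage_two hGen.finite hbot
end

section
/- Let (X_i)_{i≥1} be the stages of the discrete self-similar fractal generated by the Sierpinski triangle generator G = {(0,0),(1,0),(0,1)}. Then for every i ≥ 1 the stage X_i is connected, i.e. the graph with vertex set X_i and an edge between any two points at Euclidean distance 1 is connected; hence the Sierpinski triangle is a connected discrete self-similar fractal. -/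
open SimpleGraph Set

def latticeGraph : SimpleGraph (ℕ × ℕ) where
  Adj := adjPt
  symm := ⟨fun _ _ h => by simp only [adjPt] at *; omega⟩
  loopless := ⟨fun _ h => by simp only [adjPt] at h; omega⟩

theorem isConnectedSet_iff_connected_induce {S : Set (ℕ × ℕ)} :
    IsConnectedSet S ↔ (latticeGraph.induce S).Connected := Iff.rfl

def latticeGraph.translate (v : ℕ × ℕ) : latticeGraph →g latticeGraph where
  toFun := (· + v)
  map_rel' h := by
    simp only [latticeGraph, adjPt, Prod.fst_add, Prod.snd_add] at h ⊢
    omega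

theorem SimpleGraph.Connected.induce_image {V W : Type*} {G : SimpleGraph V}
    {G' : SimpleGraph W} (φ : G →g G') {s : Set V} (h : (G.induce s).Connected) :
    (G'.induce (φ '' s)).Connected :=
  h.map (induceHom φ (mapsTo_image φ s)) <| by
    rintro ⟨_, x, hx, rfl⟩
    exact ⟨⟨x, hx⟩, rfl⟩

theorem IsConnectedSet.image_add {S : Set (ℕ × ℕ)} (h : IsConnectedSet S) (v : ℕ × ℕ) :
    IsConnectedSet ((· + v) '' S) := by
  rw [isConnectedSet_iff_connected_induce] at h ⊢
  exact h.induce_image (latticeGraph.translate v)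

theorem IsConnectedSet.union_of_adjPt {S T : Set (ℕ × ℕ)} (hS : IsConnectedSet S)
    (hT : IsConnectedSet T) {p q : ℕ × ℕ} (hp : p ∈ S) (hq : q ∈ T) (h : adjPt p q) :
    IsConnectedSet (S ∪ T) := by
  rw [isConnectedSet_iff_connected_induce] at hS hT ⊢
  exact latticeGraph.connected_induce_union hS.preconnected hT.preconnected hp hq h

theorem isConnectedSet_sierpGen : IsConnectedSet sierpGen := by
  have h : sierpGen = {(1, 0), (0, 0)} ∪ {(0, 1)} := by
    ext; simp [sierpGen]; tauto
  rw [h]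
  have hadj : adjPt (1, 0) (0, 0) := by simp [adjPt]
  exact latticeGraph.connected_induce_union
    (induce_pair_connected_of_adj (G := latticeGraph) hadj).preconnected
    Preconnected.of_subsingleton (v := (0, 0)) (by simp) rfl (by simp [latticeGraph, adjPt])

theorem zero_mem_stage {G : Set (ℕ × ℕ)} (h : (0, 0) ∈ G) (i : ℕ) : (0, 0) ∈ stage G (i + 1) := by
  induction i with
  | zero => exact h
  | succ i ih => exact ⟨(0, 0), ih, (0, 0), h, by simp⟩

theorem wG_sierpGen : wG sierpGen = 2 := by
  simp [wG, sierpGen, image_insert_eq]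

theorem hG_sierpGen : hG sierpGen = 2 := by
  simp [hG, sierpGen, image_insert_eq]

theorem stage_add_two (G : Set (ℕ × ℕ)) (i : ℕ) :
    stage G (i + 2) =
      ⋃ b ∈ G, (· + (wG G ^ (i + 1) * b.1, hG G ^ (i + 1) * b.2)) '' stage G (i + 1) := by
  ext p
  simp only [stage, mem_iUnion, mem_image, mem_ofPred_eq]
  constructor
  · rintro ⟨a, ha, b, hb, rfl⟩
    exact ⟨b, hb, a, ha, rfl⟩
  · rintro ⟨b, hb, a, ha, rfl⟩
    exact ⟨a, ha, b, hb, rfl⟩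

theorem stage_sierpGen_add_two (i : ℕ) :
    stage sierpGen (i + 2) =
      stage sierpGen (i + 1) ∪ (· + (2 ^ (i + 1), 0)) '' stage sierpGen (i + 1) ∪
        (· + (0, 2 ^ (i + 1))) '' stage sierpGen (i + 1) := by
  rw [stage_add_two, wG_sierpGen, hG_sierpGen]
  simp [sierpGen, union_assoc, Prod.mk_zero_zero]

theorem corners_mem_stage_sierpGen (i : ℕ) :
    (2 ^ (i + 1) - 1, 0) ∈ stage sierpGen (i + 1) ∧
      (0, 2 ^ (i + 1) - 1) ∈ stage sierpGen (i + 1) := by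
  induction i with
  | zero => simp [stage, sierpGen]
  | succ i ih =>
    have hpow : 2 ^ (i + 1 + 1) - 1 = 2 ^ (i + 1) - 1 + 2 ^ (i + 1) := by
      have := Nat.one_le_two_pow (n := i + 1)
      rw [pow_succ]
      omega
    rw [stage_sierpGen_add_two, hpow]
    exact ⟨Or.inl (Or.inr (mem_image_of_mem _ ih.1)), Or.inr (mem_image_of_mem _ ih.2)⟩

theorem isConnectedSet_stage_sierpGen (i : ℕ) : IsConnectedSet (stage sierpGen (i + 1)) := by
  induction i with
  | zero => exact isConnectedSet_sierpGen
  | succ i ih =>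
    obtain ⟨hx, hy⟩ := corners_mem_stage_sierpGen i
    have h0 : (0, 0) ∈ stage sierpGen (i + 1) := zero_mem_stage (by simp [sierpGen]) i
    have hpow := Nat.one_le_two_pow (n := i + 1)
    rw [stage_sierpGen_add_two]
    refine (ih.union_of_adjPt (ih.image_add _) hx (mem_image_of_mem _ h0) ?_).union_of_adjPt
      (ih.image_add _) (Or.inl hy) (mem_image_of_mem _ h0) ?_ <;> simp [adjPt] <;> omega

/-- every stage of the Sierpinski triangle is connected, so
the Sierpinski triangle is a connected discrete self-similar fractal. -/
theorem sierpinski_stage_connected (i : ℕ) (hi : 1 ≤ i) :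
    IsConnectedSet (stage sierpGen i) := by
  obtain ⟨i, rfl⟩ := Nat.exists_eq_add_of_le' hi
  exact isConnectedSet_stage_sierpGen i
end
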